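/- arXiv:2102.12714 — 2 statements merged into one kernel-verified Lean document; each statement's English description precedes it below -/
import Mathlib

section
/- If α ∈ (0, 1/m], then the multilinear PageRank equation x = f_α(x) has exactly one stochastic solution: there is exactly one x with x ≥ 0 entrywise, Σ_i x_i = 1, and x = αR x^{⊗m} + (1−α)v. -/
/-!
The map `f_α` is monotone on the nonnegative orthant and maps the substochastic vectors
(`x ≥ 0`, `∑ xᵢ ≤ 1`) into themselves, so its iterates from `0` increase to a fixed point `x`
lying below every nonnegative fixed point. As the columns of `R` sum to `1`, the total mass
`s = ∑ xᵢ ∈ [0, 1]` is a root of `g`; by the strict Bernoulli inequality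
`sᵐ > 1 + m (s - 1)`, the only such root is `1` when `α m ≤ 1`. A stochastic solution `y`
then satisfies `x ≤ y` with equal total mass, hence `y = x`.
-/

open Finset Filter Topology Function

section KleeneIteration

variable {α : Type*} {F : α → α} {a : α}

theorem monotone_iterate_of_monotoneOn_Ici [Preorder α] (hF : MonotoneOn F (Set.Ici a))
    (ha : a ≤ F a) : Monotone fun k => F^[k] a := by
  have step : ∀ k, a ≤ F^[k] a ∧ F^[k] a ≤ F (F^[k] a) := by
    intro k
    induction k with
    | zero => exact ⟨le_rfl, ha⟩
    | succ k ih =>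
      obtain ⟨hak, hk⟩ := ih
      rw [iterate_succ_apply']
      exact ⟨hak.trans hk, hF hak (hak.trans hk) hk⟩
  exact monotone_nat_of_le_succ fun k => by
    rw [iterate_succ_apply']
    exact (step k).2

theorem iterate_le_of_map_le [Preorder α] (hF : MonotoneOn F (Set.Ici a)) (ha : a ≤ F a)
    {y : α} (hy : a ≤ y) (hFy : F y ≤ y) (k : ℕ) : F^[k] a ≤ y := by
  induction k with
  | zero => exact hy
  | succ k ih =>
    rw [iterate_succ_apply']
    exact (hF (monotone_iterate_of_monotoneOn_Ici hF ha (Nat.zero_le k)) hy ih).trans hFy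

variable [ConditionallyCompleteLattice α]

theorem ciSup_iterate_le_of_map_le (hF : MonotoneOn F (Set.Ici a)) (ha : a ≤ F a)
    {y : α} (hy : a ≤ y) (hFy : F y ≤ y) : ⨆ k, F^[k] a ≤ y :=
  ciSup_le (iterate_le_of_map_le hF ha hy hFy)

variable [TopologicalSpace α] [SupConvergenceClass α]

theorem tendsto_iterate_ciSup (hF : MonotoneOn F (Set.Ici a)) (ha : a ≤ F a)
    (hbdd : BddAbove (Set.range fun k => F^[k] a)) :
    Tendsto (fun k => F^[k] a) atTop (𝓝 (⨆ k, F^[k] a)) :=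
  tendsto_atTop_ciSup (monotone_iterate_of_monotoneOn_Ici hF ha) hbdd

theorem isFixedPt_ciSup_iterate [T2Space α] (hF : MonotoneOn F (Set.Ici a)) (ha : a ≤ F a)
    (hbdd : BddAbove (Set.range fun k => F^[k] a)) (hcont : Continuous F) :
    IsFixedPt F (⨆ k, F^[k] a) :=
  isFixedPt_of_tendsto_iterate (tendsto_iterate_ciSup hF ha hbdd) hcont.continuousAt

end KleeneIteration

theorem eq_one_of_eq_mul_pow_add_one_sub {m : ℕ} (hm : 2 ≤ m) {α s : ℝ} (hα0 : 0 < α)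
    (hαm : α ≤ 1 / (m : ℝ)) (hs0 : 0 ≤ s) (hs1 : s ≤ 1) (hs : s = α * s ^ m + (1 - α)) :
    s = 1 := by
  by_contra hne
  have bernoulli : 1 + m * (s - 1) < s ^ m := by
    have h := one_add_mul_self_lt_rpow_one_add (s := s - 1) (by linarith) (sub_ne_zero.2 hne)
      (p := m) (by exact_mod_cast hm)
    simpa only [add_sub_cancel, Real.rpow_natCast] using h
  have hαm' : α * m ≤ 1 := by
    rwa [le_div_iff₀ (by positivity)] at hαm
  have hs1' : s < 1 := lt_of_le_of_ne hs1 hne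
  nlinarith [mul_lt_mul_of_pos_left bernoulli hα0,
    mul_nonneg (sub_nonneg.2 hαm') (sub_pos.2 hs1').le]

section SubStochastic

variable (ι : Type*) [Fintype ι]

def subStochastic : Set (ι → ℝ) := {x | 0 ≤ x ∧ ∑ i, x i ≤ 1}

variable {ι}

theorem isClosed_subStochastic : IsClosed (subStochastic ι) :=
  (isClosed_le continuous_const continuous_id).inter
    (isClosed_le (continuous_finsetSum _ fun i _ => continuous_apply i) continuous_const)

theorem subStochastic_subset_Iic_one : subStochastic ι ⊆ Set.Iic 1 := fun _ ⟨hx0, hx1⟩ i =>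
  (single_le_sum (fun j _ => hx0 j) (mem_univ i)).trans hx1

end SubStochastic

section MultilinearPageRank

variable {ι : Type*} [Fintype ι] {m : ℕ}

/-- The map `f_α(x) = α R x^{⊗m} + (1 - α) v`. -/
def mlprMap (R : Matrix ι (Fin m → ι) ℝ) (v : ι → ℝ) (α : ℝ) (x : ι → ℝ) : ι → ℝ :=
  fun i => α * (∑ j, R i j * ∏ p, x (j p)) + (1 - α) * v i

variable {R : Matrix ι (Fin m → ι) ℝ} {v : ι → ℝ} {α : ℝ}

theorem continuous_mlprMap : Continuous (mlprMap R v α) := by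
  unfold mlprMap
  fun_prop

theorem monotoneOn_mlprMap (hR : ∀ i j, 0 ≤ R i j) (hα : 0 ≤ α) :
    MonotoneOn (mlprMap R v α) (Set.Ici 0) := by
  intro a ha b _ hab i
  unfold mlprMap
  gcongr with j _ p _
  · exact hR i j
  · exact fun p _ => ha _
  · exact hab _

theorem mlprMap_nonneg (hR : ∀ i j, 0 ≤ R i j) (hv : ∀ i, 0 ≤ v i) (hα0 : 0 ≤ α)
    (hα_le_one : α ≤ 1) {x : ι → ℝ} (hx : 0 ≤ x) : 0 ≤ mlprMap R v α x := fun i =>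
  add_nonneg
    (mul_nonneg hα0 (sum_nonneg fun j _ => mul_nonneg (hR i j) (prod_nonneg fun _ _ => hx _)))
    (mul_nonneg (sub_nonneg.2 hα_le_one) (hv i))

theorem sum_mlprMap (hRcol : ∀ j, ∑ i, R i j = 1) (hv1 : ∑ i, v i = 1) (x : ι → ℝ) :
    ∑ i, mlprMap R v α x i = α * (∑ i, x i) ^ m + (1 - α) := by
  have hRx : ∑ i, ∑ j, R i j * ∏ p, x (j p) = (∑ i, x i) ^ m := by
    simp only [sum_comm (γ := ι), ← sum_mul, hRcol, one_mul, Fintype.sum_pow]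
  simp only [mlprMap, sum_add_distrib, ← mul_sum, hRx, hv1, mul_one]

theorem mapsTo_mlprMap_subStochastic (hR : ∀ i j, 0 ≤ R i j) (hRcol : ∀ j, ∑ i, R i j = 1)
    (hv : ∀ i, 0 ≤ v i) (hv1 : ∑ i, v i = 1) (hα0 : 0 ≤ α) (hα_le_one : α ≤ 1) :
    Set.MapsTo (mlprMap R v α) (subStochastic ι) (subStochastic ι) := by
  rintro x ⟨hx0, hx1⟩
  refine ⟨mlprMap_nonneg hR hv hα0 hα_le_one hx0, ?_⟩
  have hpow : (∑ i, x i) ^ m ≤ 1 := pow_le_one₀ (sum_nonneg fun i _ => hx0 i) hx1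
  rw [sum_mlprMap hRcol hv1]
  nlinarith

end MultilinearPageRank

theorem mlpr_unique_stochastic_solution_small_alpha_general
    (n m : ℕ) (hm : 2 ≤ m)
    (R : Matrix (Fin n) ((Fin m → Fin n)) ℝ)
    (hR : ∀ i j, 0 ≤ R i j)
    (hRcol : ∀ j, ∑ i, R i j = 1)
    (v : Fin n → ℝ) (hv : ∀ i, 0 ≤ v i) (hv1 : ∑ i, v i = 1)
    (α : ℝ) (hα0 : 0 < α) (hαm : α ≤ 1 / (m : ℝ)) :
    ∃! x : Fin n → ℝ, (∀ i, 0 ≤ x i) ∧ (∑ i, x i = 1) ∧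
      (∀ i, x i = α * (∑ j, R i j * ∏ p, x (j p)) + (1 - α) * v i) := by
  have hα_le_one : α ≤ 1 := hαm.trans (div_le_one_of_le₀ (by norm_cast; omega) m.cast_nonneg)
  set F := mlprMap R v α
  have hF : MonotoneOn F (Set.Ici 0) := monotoneOn_mlprMap hR hα0.le
  have hF0 : 0 ≤ F 0 := mlprMap_nonneg hR hv hα0.le hα_le_one le_rfl
  have hS : ∀ k, F^[k] 0 ∈ subStochastic (Fin n) := fun k =>
    (mapsTo_mlprMap_subStochastic hR hRcol hv hv1 hα0.le hα_le_one).iterate k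
      ⟨le_rfl, by simp⟩
  have hbdd : BddAbove (Set.range fun k => F^[k] 0) :=
    ⟨1, (Set.range_subset_iff.2 hS).trans subStochastic_subset_Iic_one⟩
  set x := ⨆ k, F^[k] 0
  have hfix : F x = x := isFixedPt_ciSup_iterate hF hF0 hbdd continuous_mlprMap
  obtain ⟨hx0, hx1⟩ : x ∈ subStochastic (Fin n) :=
    isClosed_subStochastic.mem_of_tendsto (tendsto_iterate_ciSup hF hF0 hbdd) (.of_forall hS)
  have hmass : ∑ i, x i = α * (∑ i, x i) ^ m + (1 - α) := by
    conv_lhs => rw [← hfix]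
    exact sum_mlprMap hRcol hv1 x
  have hxsum : ∑ i, x i = 1 :=
    eq_one_of_eq_mul_pow_add_one_sub hm hα0 hαm (sum_nonneg fun i _ => hx0 i) hx1 hmass
  refine ⟨x, ⟨hx0, hxsum, fun i => (congrFun hfix i).symm⟩, ?_⟩
  rintro y ⟨hy0, hy1, hyfix⟩
  have hxy : x ≤ y := ciSup_iterate_le_of_map_le hF hF0 hy0 (funext fun i => (hyfix i).symm).le
  exact funext fun i => ((sum_eq_sum_iff_of_le fun i _ => hxy i).1 (hxsum.trans hy1.symm) i
    (mem_univ i)).symm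

/-- If `α ∈ (0, 1/m]`, the multilinear PageRank equation has exactly one
stochastic solution. -/
theorem mlpr_unique_stochastic_solution_small_alpha
    (n m : ℕ) (hn : 1 ≤ n) (hm : 2 ≤ m)
    (R : Matrix (Fin n) ((Fin m → Fin n)) ℝ)
    (hR : ∀ i j, 0 ≤ R i j)
    (hRcol : ∀ j, ∑ i, R i j = 1)
    (v : Fin n → ℝ) (hv : ∀ i, 0 ≤ v i) (hv1 : ∑ i, v i = 1)
    (α : ℝ) (hα0 : 0 < α) (hα1 : α < 1) (hαm : α ≤ 1 / (m : ℝ)) :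
    ∃! x : Fin n → ℝ, (∀ i, 0 ≤ x i) ∧ (∑ i, x i = 1) ∧
      (∀ i, x i = α * (∑ j, R i j * ∏ p, x (j p)) + (1 - α) * v i) :=
  mlpr_unique_stochastic_solution_small_alpha_general n m hm R hR hRcol v hv hv1 α hα0 hαm
end

section
/- Let α = 1/m and let x ∈ ℝ^n be a strictly positive stochastic solution of x = αR x^{⊗m} + (1−α)v (x_i > 0 for all i, Σ_i x_i = 1). Then the matrix (1/m)P_x − I has rank n−1, and the row vectors w^T with w^T((1/m)P_x − I) = 0 are exactly the scalar multiples of e^T (e the all-ones vector); equivalently, the kernel of ((1/m)P_x − I)^T is the span of e. -/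
/-!
`M = (1/m) P_x` is nonnegative with column sums `1`: summing `P_x` over a column sums `R` over its
rows and leaves `m` copies of `(∑ x)^(m-1) = 1`. It is moreover scrambling: for columns `a`, `b`,
the tuple with `a` in one slot and `b` in another is sent by `R` to a probability vector, and any
row `i` in its support makes both `P_{ia}` and `P_{ib}` positive because `x > 0`. A row vector
fixed by a nonnegative column-stochastic `M` takes its maximum at every `i` with `M_{ia} > 0`, `a`
a maximiser, and likewise its minimum; a common such `i` forces max = min. Rank-nullity gives the
rank.
-/

open Finset

namespace Matrix

variable {ι : Type*} [Fintype ι]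

/-- Seneta's scrambling condition, for the column-stochastic convention: any two columns have a
common positive row. -/
def IsScrambling (M : Matrix ι ι ℝ) : Prop :=
  ∀ a b, ∃ i, 0 < M i a ∧ 0 < M i b

omit [Fintype ι] in
theorem IsScrambling.smul {M : Matrix ι ι ℝ} (hM : M.IsScrambling) {c : ℝ} (hc : 0 < c) :
    (c • M).IsScrambling := fun a b =>
  let ⟨i, hia, hib⟩ := hM a b
  ⟨i, by simpa using mul_pos hc hia, by simpa using mul_pos hc hib⟩

section ColumnStochastic

variable {M : Matrix ι ι ℝ} (hM : ∀ i j, 0 ≤ M i j) (hcol : ∀ j, ∑ i, M i j = 1)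
include hM hcol

omit hM in
theorem const_vecMul_of_sum_col_eq_one (c : ℝ) : (fun _ => c) ᵥ* M = fun _ => c := by
  ext j
  simp [vecMul, dotProduct, ← mul_sum, hcol j]

theorem eq_of_vecMul_eq_self_of_isMax {w : ι → ℝ} (hw : w ᵥ* M = w) {a i : ι}
    (ha : ∀ k, w k ≤ w a) (hi : 0 < M i a) : w i = w a := by
  have hgap : ∑ k, (w a - w k) * M k a = 0 := by
    have := congrFun hw a
    simp only [vecMul, dotProduct] at this
    simp [sub_mul, sum_sub_distrib, ← mul_sum, hcol a, this]
  have := (sum_eq_zero_iff_of_nonneg fun k _ =>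
    mul_nonneg (sub_nonneg.2 (ha k)) (hM k a)).1 hgap i (mem_univ i)
  linarith [(mul_eq_zero.1 this).resolve_right hi.ne']

theorem vecMul_eq_self_iff_of_isScrambling (hscr : M.IsScrambling) (w : ι → ℝ) :
    w ᵥ* M = w ↔ ∃ c : ℝ, w = fun _ => c := by
  refine ⟨fun hw => ?_, fun ⟨c, hc⟩ => hc ▸ const_vecMul_of_sum_col_eq_one hcol c⟩
  cases isEmpty_or_nonempty ι
  · exact ⟨0, funext isEmptyElim⟩
  obtain ⟨a, ha⟩ := Finite.exists_max w
  obtain ⟨b, hb⟩ := Finite.exists_min w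
  obtain ⟨i, hia, hib⟩ := hscr a b
  have hmax : w i = w a := eq_of_vecMul_eq_self_of_isMax hM hcol hw ha hia
  have hmin : -w i = -w b := eq_of_vecMul_eq_self_of_isMax hM hcol (w := -w)
    (by rw [neg_vecMul, hw]) (fun k => neg_le_neg (hb k)) hib
  exact ⟨w a, funext fun k => le_antisymm (ha k) (by linarith [hb k])⟩

end ColumnStochastic

theorem rank_eq_card_sub_one_of_vecMul_eq_zero_iff {A : Matrix ι ι ℝ}
    (hA : ∀ w, w ᵥ* A = 0 ↔ ∃ c : ℝ, w = fun _ => c) : A.rank = Fintype.card ι - 1 := by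
  cases isEmpty_or_nonempty ι
  · simpa using A.rank_le_card_width
  have hker : LinearMap.ker Aᵀ.mulVecLin = Submodule.span ℝ {fun _ => (1 : ℝ)} := by
    ext w
    simp only [LinearMap.mem_ker, mulVecLin_apply, mulVec_transpose, hA,
      Submodule.mem_span_singleton]
    exact ⟨fun ⟨c, hc⟩ => ⟨c, by ext; simp [hc]⟩, fun ⟨c, hc⟩ => ⟨c, by ext; simp [← hc]⟩⟩
  have hones : (fun _ => (1 : ℝ)) ≠ (0 : ι → ℝ) := fun h =>
    one_ne_zero (congrFun h (Classical.arbitrary ι))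
  have := LinearMap.finrank_range_add_finrank_ker Aᵀ.mulVecLin
  rw [hker, finrank_span_singleton hones, Module.finrank_fintype_fun_eq_card] at this
  rw [← rank_transpose]
  exact Nat.eq_sub_of_add_eq this

end Matrix

open Matrix

section TensorPowJacobian

variable {ι κ : Type*} [Fintype ι] [DecidableEq ι] [Fintype κ] [DecidableEq κ]

/-- The Jacobian at `x` of `x ↦ R x^{⊗κ}`, the tensor power indexed by the slots `κ`. -/
def tensorPowJacobian (R : Matrix ι (κ → ι) ℝ) (x : ι → ℝ) : Matrix ι ι ℝ :=
  of fun i j => ∑ p : κ, ∑ t : κ → ι, if t p = j then R i t * ∏ q ∈ univ.erase p, x (t q) else 0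

variable {R : Matrix ι (κ → ι) ℝ} {x : ι → ℝ}

omit [Fintype ι] in
theorem ite_mul_prod_erase_nonneg (hR : ∀ i t, 0 ≤ R i t) (hx : ∀ i, 0 ≤ x i) (i j : ι) (p : κ)
    (t : κ → ι) : 0 ≤ if t p = j then R i t * ∏ q ∈ univ.erase p, x (t q) else 0 := by
  split_ifs
  exacts [mul_nonneg (hR i t) (prod_nonneg fun q _ => hx _), le_rfl]

theorem tensorPowJacobian_nonneg (hR : ∀ i t, 0 ≤ R i t) (hx : ∀ i, 0 ≤ x i) (i j : ι) :
    0 ≤ tensorPowJacobian R x i j :=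
  sum_nonneg fun p _ => sum_nonneg fun t _ => ite_mul_prod_erase_nonneg hR hx i j p t

theorem sum_ite_prod_erase_eq_one (hx1 : ∑ i, x i = 1) (p : κ) (j : ι) :
    ∑ t : κ → ι, (if t p = j then ∏ q ∈ univ.erase p, x (t q) else 0) = 1 := by
  have hfactor : ∀ t : κ → ι, (if t p = j then ∏ q ∈ univ.erase p, x (t q) else 0) =
      ∏ q, if q = p then (if t q = j then 1 else 0) else x (t q) := by
    intro t
    rw [← mul_prod_erase _ _ (mem_univ p), if_pos rfl,
      prod_congr rfl fun q hq => if_neg (ne_of_mem_erase hq)]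
    split_ifs <;> simp
  simp_rw [hfactor]
  calc _ = ∏ q, ∑ k, if q = p then (if k = j then 1 else 0) else x k :=
        (Fintype.prod_sum _).symm
    _ = 1 := prod_eq_one fun q _ => by split_ifs <;> simp [hx1]

theorem sum_tensorPowJacobian_col (hRcol : ∀ t, ∑ i, R i t = 1) (hx1 : ∑ i, x i = 1) (j : ι) :
    ∑ i, tensorPowJacobian R x i j = Fintype.card κ := by
  calc ∑ i, tensorPowJacobian R x i j
      = ∑ p : κ, ∑ t : κ → ι,
          if t p = j then (∑ i, R i t) * ∏ q ∈ univ.erase p, x (t q) else 0 := by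
        simp only [tensorPowJacobian, of_apply, sum_mul]
        rw [sum_comm]
        refine sum_congr rfl fun p _ => ?_
        rw [sum_comm]
        refine sum_congr rfl fun t _ => ?_
        split_ifs <;> simp
    _ = ∑ _p : κ, (1 : ℝ) := by
        simp only [hRcol, one_mul, sum_ite_prod_erase_eq_one hx1]
    _ = Fintype.card κ := by simp

theorem tensorPowJacobian_pos (hR : ∀ i t, 0 ≤ R i t) (hx : ∀ i, 0 < x i) {i : ι} {t : κ → ι}
    (ht : 0 < R i t) (p : κ) : 0 < tensorPowJacobian R x i (t p) := by
  have hsummand := ite_mul_prod_erase_nonneg hR (fun k => (hx k).le) i (t p)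
  have hterm : 0 < if t p = t p then R i t * ∏ q ∈ univ.erase p, x (t q) else 0 := by
    rw [if_pos rfl]
    exact mul_pos ht (prod_pos fun q _ => hx _)
  exact sum_pos' (fun p' _ => sum_nonneg fun t' _ => hsummand p' t')
    ⟨p, mem_univ p, sum_pos' (fun t' _ => hsummand p t') ⟨t, mem_univ t, hterm⟩⟩

theorem isScrambling_tensorPowJacobian (hR : ∀ i t, 0 ≤ R i t) (hRcol : ∀ t, ∑ i, R i t = 1)
    (hx : ∀ i, 0 < x i) {p q : κ} (hpq : p ≠ q) : (tensorPowJacobian R x).IsScrambling := by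
  intro a b
  set t : κ → ι := Function.update (fun _ => b) p a
  obtain ⟨i, -, hi⟩ : ∃ i ∈ univ, (0 : ℝ) < R i t :=
    exists_lt_of_sum_lt (by simp [hRcol t])
  refine ⟨i, ?_, ?_⟩
  · simpa [t] using tensorPowJacobian_pos hR hx hi p
  · simpa [t, hpq.symm] using tensorPowJacobian_pos hR hx hi q

end TensorPowJacobian

theorem mlpr_jacobian_rank_corank_one_general
    (n m : ℕ) (hm : 2 ≤ m)
    (R : Matrix (Fin n) ((Fin m → Fin n)) ℝ)
    (hR : ∀ i j, 0 ≤ R i j)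
    (hRcol : ∀ j, ∑ i, R i j = 1)
    (x : Fin n → ℝ) (hx : ∀ i, 0 < x i) (hx1 : ∑ i, x i = 1)
    (P : Matrix (Fin n) (Fin n) ℝ)
    (hP : ∀ i j, P i j =
      ∑ p : Fin m, ∑ t : Fin m → Fin n,
        if t p = j then R i t * ∏ q ∈ Finset.univ.erase p, x (t q) else 0) :
    ((1 / (m : ℝ)) • P - 1).rank = n - 1 ∧
    (∀ w : Fin n → ℝ,
      Matrix.vecMul w ((1 / (m : ℝ)) • P - 1) = 0 ↔ ∃ c : ℝ, w = fun _ => c) := by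
  obtain rfl : P = tensorPowJacobian R x := Matrix.ext hP
  have hm₀ : (0 : ℝ) < 1 / m := by
    have : (0 : ℝ) < m := by exact_mod_cast (by omega : 0 < m)
    positivity
  set M := (1 / (m : ℝ)) • tensorPowJacobian R x
  have hM i j : 0 ≤ M i j :=
    mul_nonneg hm₀.le (tensorPowJacobian_nonneg hR (fun k => (hx k).le) i j)
  have hcol j : ∑ i, M i j = 1 := by
    simp only [M, Matrix.smul_apply, smul_eq_mul, ← mul_sum, sum_tensorPowJacobian_col hRcol hx1,
      Fintype.card_fin]
    field_simp
  have hscr : M.IsScrambling := (isScrambling_tensorPowJacobian hR hRcol hx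
    (p := ⟨0, by omega⟩) (q := ⟨1, by omega⟩) (by simp)).smul hm₀
  have hker w : w ᵥ* (M - 1) = 0 ↔ ∃ c : ℝ, w = fun _ => c := by
    rw [vecMul_sub, vecMul_one, sub_eq_zero]
    exact vecMul_eq_self_iff_of_isScrambling hM hcol hscr w
  simpa using And.intro (rank_eq_card_sub_one_of_vecMul_eq_zero_iff hker) hker

/-- If `α = 1/m` and `x` is a strictly positive stochastic solution of the
multilinear PageRank equation, then `(1/m) P_x - I` has rank `n-1`, and the left null
vectors `w` (i.e. `wᵀ((1/m)P_x - I) = 0`) are exactly the scalar multiples of the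
all-ones vector. -/
theorem mlpr_jacobian_rank_corank_one
    (n m : ℕ) (hn : 1 ≤ n) (hm : 2 ≤ m)
    (R : Matrix (Fin n) ((Fin m → Fin n)) ℝ)
    (hR : ∀ i j, 0 ≤ R i j)
    (hRcol : ∀ j, ∑ i, R i j = 1)
    (v : Fin n → ℝ) (hv : ∀ i, 0 ≤ v i) (hv1 : ∑ i, v i = 1)
    (x : Fin n → ℝ) (hx : ∀ i, 0 < x i) (hx1 : ∑ i, x i = 1)
    (hsol : ∀ i, x i = (1 / (m : ℝ)) * (∑ j, R i j * ∏ p, x (j p))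
      + (1 - 1 / (m : ℝ)) * v i)
    (P : Matrix (Fin n) (Fin n) ℝ)
    (hP : ∀ i j, P i j =
      ∑ p : Fin m, ∑ t : Fin m → Fin n,
        if t p = j then R i t * ∏ q ∈ Finset.univ.erase p, x (t q) else 0) :
    ((1 / (m : ℝ)) • P - 1).rank = n - 1 ∧
    (∀ w : Fin n → ℝ,
      Matrix.vecMul w ((1 / (m : ℝ)) • P - 1) = 0 ↔ ∃ c : ℝ, w = fun _ => c) :=
  mlpr_jacobian_rank_corank_one_general n m hm R hR hRcol x hx hx1 P hP
end
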